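/- arXiv:1602.08867 — 2 statements merged into one kernel-verified Lean document; each statement's English description precedes it below -/
import Mathlib

section
/- Every word w on an alphabet S can be transformed by a finite sequence of one-step reductions into a reduced word, and this reduced word is unique: if u and v are reduced words each obtainable from w by a (possibly empty) finite sequence of one-step reductions, then u = v. -/
/-! The reduced form of a word is computed explicitly: collapse every run of equal letters
(`List.destutter`), then delete the last letter if it equals the first. One deletion suffices,
since after collapsing the penultimate letter differs from the last. Both kinds of one-step
reduction leave this normal form unchanged and a reduced word is its own normal form, which
gives uniqueness; the normal form is itself reachable by one-step reductions, which gives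
existence. -/

/-- One-step reduction of words: either an adjacent equal pair `aa` is replaced
by `a`, or (for a word of length at least two whose first and last letters are
equal) the last letter is deleted. -/
def Step {S : Type*} (w v : List S) : Prop :=
  (∃ (u₁ : List S) (a : S) (u₂ : List S), w = u₁ ++ [a, a] ++ u₂ ∧ v = u₁ ++ [a] ++ u₂) ∨
  (2 ≤ w.length ∧ w.head? = w.getLast? ∧ v = w.dropLast)

/-- A word is reduced if it has no two equal adjacent letters and either has
length one or has different first and last letters. -/
def Reduced {S : Type*} (w : List S) : Prop :=
  w.Chain' (· ≠ ·) ∧ (w.length = 1 ∨ w.head? ≠ w.getLast?)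

/-- `IsReduction w u` : the reduced word `u` is obtainable from `w` by a finite
(possibly empty) sequence of one-step reductions, i.e. `u = r(w)`. -/
def IsReduction {S : Type*} (w u : List S) : Prop :=
  Relation.ReflTransGen Step w u ∧ Reduced u

open Classical in
/-- The restriction `w|A` of a word to a sub-alphabet `A`: delete all letters not in `A`. -/
noncomputable def restrictWord {S : Type*} (w : List S) (A : Set S) : List S :=
  w.filter fun a => decide (a ∈ A)

/-- A word is crossing if it contains the pattern `… a … b … a … b …` with `a ≠ b`. -/
def Crossing {S : Type*} (w : List S) : Prop :=
  ∃ (i j k l : ℕ) (hij : i < j) (hjk : j < k) (hkl : k < l) (hl : l < w.length),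
    w[i]'(by omega) = w[k]'(by omega) ∧ w[j]'(by omega) = w[l]'hl ∧
    w[i]'(by omega) ≠ w[j]'(by omega)

open List Relation

namespace List

variable {α : Type*} {R : α → α → Prop}

theorem exists_eq_append_cons_cons_of_not_isChain {l : List α} (h : ¬l.IsChain R) :
    ∃ l₁ a b l₂, ¬R a b ∧ l = l₁ ++ a :: b :: l₂ := by
  induction l with
  | nil => exact absurd isChain_nil h
  | cons a t ih =>
    cases t with
    | nil => exact absurd (isChain_singleton a) h
    | cons b s =>
      rw [isChain_cons_cons, not_and_or] at h
      rcases h with hab | hbs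
      · exact ⟨[], a, b, s, hab, rfl⟩
      · obtain ⟨l₁, x, y, l₂, hxy, he⟩ := ih hbs
        exact ⟨a :: l₁, x, y, l₂, hxy, by simp [he]⟩

variable [DecidableRel R]

theorem head?_destutter' (l : List α) (b : α) : (l.destutter' R b).head? = some b := by
  induction l generalizing b with
  | nil => rfl
  | cons c t ih =>
    rw [destutter'_cons]
    split
    · rfl
    · exact ih b

theorem head?_destutter (l : List α) : (l.destutter R).head? = l.head? := by
  cases l with
  | nil => rfl
  | cons a t => rw [destutter_cons', head?_destutter', head?_cons]

theorem destutter'_append_cons_cons_of_not_rel {a : α} (h : ¬R a a) (l₁ l₂ : List α)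
    (b : α) :
    (l₁ ++ a :: a :: l₂).destutter' R b = (l₁ ++ a :: l₂).destutter' R b := by
  induction l₁ generalizing b with
  | nil =>
    by_cases hba : R b a
    · simp [destutter'_cons_pos _ hba, destutter'_cons_neg _ h]
    · simp [destutter'_cons_neg _ hba]
  | cons c t ih =>
    simp only [cons_append, destutter'_cons]
    split <;> rw [ih]

theorem destutter_append_cons_cons_of_not_rel {a : α} (h : ¬R a a) (l₁ l₂ : List α) :
    (l₁ ++ a :: a :: l₂).destutter R = (l₁ ++ a :: l₂).destutter R := by
  cases l₁ with
  | nil => simp [destutter_cons', destutter'_cons_neg _ h]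
  | cons c t => simp only [cons_append, destutter_cons', destutter'_append_cons_cons_of_not_rel h]

theorem destutter'_concat_of_rel {c : α} (l : List α) (b : α)
    (h : ∀ x ∈ (l.destutter' R b).getLast?, R x c) :
    (l ++ [c]).destutter' R b = l.destutter' R b ++ [c] := by
  induction l generalizing b with
  | nil => simp_all
  | cons d t ih =>
    by_cases hbd : R b d
    · simp only [cons_append, destutter'_cons_pos _ hbd] at h ⊢
      refine congrArg (b :: ·) (ih d fun x hx => ?_)
      rw [getLast?_cons, Option.mem_def.1 hx] at h
      exact h x rfl
    · simp only [cons_append, destutter'_cons_neg _ hbd] at h ⊢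
      exact ih b h

theorem destutter_concat_of_rel {c : α} (l : List α)
    (h : ∀ x ∈ (l.destutter R).getLast?, R x c) :
    (l ++ [c]).destutter R = l.destutter R ++ [c] := by
  cases l with
  | nil => rfl
  | cons a t => rw [cons_append, destutter_cons', destutter_cons', destutter'_concat_of_rel _ _ h]

theorem getLast?_destutter'_ne [DecidableEq α] (l : List α) (b : α) :
    (l.destutter' (· ≠ ·) b).getLast? = (b :: l).getLast? := by
  induction l generalizing b with
  | nil => rfl
  | cons c t ih =>
    by_cases hbc : b = c
    · subst hbc
      rw [destutter'_cons_neg _ (not_not.2 rfl), ih]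
      cases t <;> rfl
    · rw [destutter'_cons_pos _ hbc, getLast?_cons_of_ne_nil (destutter'_ne_nil _ _), ih,
        getLast?_cons_cons]

theorem getLast?_destutter_ne [DecidableEq α] (l : List α) :
    (l.destutter (· ≠ ·)).getLast? = l.getLast? := by
  cases l with
  | nil => rfl
  | cons a t => rw [destutter_cons', getLast?_destutter'_ne]

end List

section Reduction

variable {S : Type*} [DecidableEq S]

def dropRepeatedLast (d : List S) : List S :=
  if 2 ≤ d.length ∧ d.head? = d.getLast? then d.dropLast else d

def reduction (w : List S) : List S :=
  dropRepeatedLast (w.destutter (· ≠ ·))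

theorem dropRepeatedLast_of_head?_ne_getLast? {d : List S} (h : d.head? ≠ d.getLast?) :
    dropRepeatedLast d = d :=
  if_neg fun h' => h h'.2

theorem dropRepeatedLast_append_singleton {d : List S} {c : S} (h : d.head? = some c) :
    dropRepeatedLast (d ++ [c]) = d := by
  have hd : d ≠ [] := by rintro rfl; cases h
  rw [dropRepeatedLast, if_pos, dropLast_concat]
  refine ⟨?_, by rw [head?_append_of_ne_nil _ hd, getLast?_concat, h]⟩
  have := length_pos_of_ne_nil hd
  simp only [length_append, length_singleton]
  omega

theorem reduced_dropRepeatedLast {d : List S} (hd : d.IsChain (· ≠ ·)) (hne : d ≠ []) :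
    Reduced (dropRepeatedLast d) := by
  unfold dropRepeatedLast
  split_ifs with h
  · obtain ⟨hlen, hhead⟩ := h
    obtain ⟨l, c, rfl⟩ := (eq_nil_or_concat d).resolve_left hne
    have hl : l ≠ [] := by rintro rfl; simp at hlen
    rw [concat_eq_append] at hd hhead ⊢
    rw [dropLast_concat]
    obtain ⟨hchain, -, hlast⟩ := isChain_append.1 hd
    refine ⟨hchain, Or.inr ?_⟩
    rw [head?_append_of_ne_nil _ hl, getLast?_concat] at hhead
    rw [hhead]
    exact fun h => hlast c h.symm c rfl rfl
  · refine ⟨hd, ?_⟩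
    by_cases hlen : 2 ≤ d.length
    · exact Or.inr fun h' => h ⟨hlen, h'⟩
    · have := length_pos_of_ne_nil hne
      exact Or.inl (by omega)

theorem reduction_of_reduced {w : List S} (h : Reduced w) : reduction w = w := by
  rw [reduction, destutter_of_isChain _ _ h.1]
  exact if_neg fun ⟨hlen, heq⟩ => h.2.elim (by omega) (· heq)

theorem reduced_reduction {w : List S} (hw : w ≠ []) : Reduced (reduction w) :=
  reduced_dropRepeatedLast (isChain_destutter _ _) (by rwa [Ne, destutter_eq_nil])

theorem reduction_append_pair_append (u₁ : List S) (a : S) (u₂ : List S) :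
    reduction (u₁ ++ [a, a] ++ u₂) = reduction (u₁ ++ [a] ++ u₂) := by
  simp only [reduction, append_assoc, cons_append, nil_append,
    destutter_append_cons_cons_of_not_rel (R := (· ≠ ·)) (a := a) (fun h => h rfl)]

theorem reduction_concat_of_head?_eq {l : List S} {c : S} (hhead : l.head? = some c) :
    reduction (l ++ [c]) = reduction l := by
  obtain ⟨ys, rfl⟩ | hlast := em (∃ ys, l = ys ++ [c])
  · -- deleting the final `c` of `ys ++ [c, c]` is the same as collapsing `c, c`
    simpa using reduction_append_pair_append ys c []
  · have hlast : ∀ x ∈ (l.destutter (· ≠ ·)).getLast?, x ≠ c := by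
      rintro x hx rfl
      rw [getLast?_destutter_ne, Option.mem_def, getLast?_eq_some_iff] at hx
      exact hlast hx
    have hhead' : (l.destutter (· ≠ ·)).head? = some c := by rw [head?_destutter, hhead]
    rw [reduction, reduction, destutter_concat_of_rel _ hlast,
      dropRepeatedLast_append_singleton hhead',
      dropRepeatedLast_of_head?_ne_getLast? fun h => hlast c (hhead'.symm.trans h).symm rfl]

theorem reduction_eq_of_step {w v : List S} (h : Step w v) : reduction w = reduction v := by
  rcases h with ⟨u₁, a, u₂, rfl, rfl⟩ | ⟨hlen, hhead, rfl⟩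
  · exact reduction_append_pair_append u₁ a u₂
  · obtain ⟨l, c, rfl⟩ := (eq_nil_or_concat w).resolve_left (by rintro rfl; simp at hlen)
    have hl : l ≠ [] := by rintro rfl; simp at hlen
    rw [concat_eq_append, dropLast_concat]
    rw [concat_eq_append, head?_append_of_ne_nil _ hl, getLast?_concat] at hhead
    exact reduction_concat_of_head?_eq hhead

theorem reduction_eq_of_reflTransGen {w v : List S} (h : ReflTransGen Step w v) :
    reduction w = reduction v := by
  induction h with
  | refl => rfl
  | tail _ hstep ih => rw [ih, reduction_eq_of_step hstep]

theorem reflTransGen_step_destutter (w : List S) :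
    ReflTransGen Step w (w.destutter (· ≠ ·)) := by
  by_cases h : w.IsChain (· ≠ ·)
  · rw [destutter_of_isChain _ _ h]
  · obtain ⟨u₁, a, b, u₂, hab, rfl⟩ := exists_eq_append_cons_cons_of_not_isChain h
    obtain rfl : a = b := not_not.1 hab
    rw [destutter_append_cons_cons_of_not_rel hab]
    exact .head (Or.inl ⟨u₁, a, u₂, by simp, by simp⟩) (reflTransGen_step_destutter _)
termination_by w.length
decreasing_by subst_vars; simp

theorem reflTransGen_step_dropRepeatedLast (d : List S) :
    ReflTransGen Step d (dropRepeatedLast d) := by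
  unfold dropRepeatedLast
  split_ifs with h
  · exact .single (Or.inr ⟨h.1, h.2, rfl⟩)
  · exact .refl

theorem isReduction_reduction {w : List S} (hw : w ≠ []) : IsReduction w (reduction w) :=
  ⟨(reflTransGen_step_destutter w).trans (reflTransGen_step_dropRepeatedLast _),
    reduced_reduction hw⟩

theorem IsReduction.eq_reduction {w u : List S} (h : IsReduction w u) : u = reduction w :=
  (reduction_of_reduced h.2).symm.trans (reduction_eq_of_reflTransGen h.1).symm

end Reduction

/-- Every word can be transformed by finitely many one-step reductions into a
reduced word, and the resulting reduced word is unique. -/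
theorem exists_unique_reduction {S : Type*} (w : List S) (hw : w ≠ []) :
    (∃ u, IsReduction w u) ∧ ∀ u v, IsReduction w u → IsReduction w v → u = v := by
  classical
  exact ⟨⟨reduction w, isReduction_reduction hw⟩,
    fun u v hu hv => hu.eq_reduction.trans hv.eq_reduction.symm⟩
end

section
/- Let w be a crossing word on an alphabet S and let f : S → T be any function. Then either the word f(w) is crossing, or there exists t in T such that the restriction w | f⁻¹({t}) is defined and crossing. -/
theorem crossing_iff_exists_sublist {S : Type*} {w : List S} :
    Crossing w ↔ ∃ a b : S, a ≠ b ∧ [a, b, a, b].Sublist w := by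
  simp only [List.sublist_iff_exists_fin_orderEmbedding_get_eq]
  constructor
  · rintro ⟨i, j, k, l, hij, hjk, hkl, hl, hik, hjl, hab⟩
    let e : Fin 4 → Fin w.length := ![⟨i, by omega⟩, ⟨j, by omega⟩, ⟨k, by omega⟩, ⟨l, hl⟩]
    have he : StrictMono e := Fin.strictMono_iff_lt_succ.2 fun m => by
      fin_cases m <;> simpa [e, ← Fin.val_fin_lt]
    refine ⟨_, _, hab, OrderEmbedding.ofStrictMono e he, fun ix => ?_⟩
    fin_cases ix <;> simp [e, hik, hjl]
  · rintro ⟨a, b, hab, g, hg⟩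
    have hlt : ∀ m n : Fin 4, m < n → g m < g n := fun m n => g.lt_iff_lt.2
    refine ⟨g 0, g 1, g 2, g 3, hlt 0 1 (by decide), hlt 1 2 (by decide), hlt 2 3 (by decide),
      (g 3).2, ?_, ?_, ?_⟩
    · simpa using (hg 0).symm.trans (hg 2)
    · simpa using (hg 1).symm.trans (hg 3)
    · exact fun h => hab <| by simpa using (hg 0).trans (h.trans (hg 1).symm)

theorem crossing_map_of_sublist {S T : Type*} (f : S → T) {w : List S} {a b : S}
    (hsub : [a, b, a, b].Sublist w) (hf : f a ≠ f b) : Crossing (w.map f) :=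
  crossing_iff_exists_sublist.2 ⟨f a, f b, hf, hsub.map f⟩

theorem crossing_restrictWord_of_sublist {S : Type*} {w : List S} {A : Set S} {a b : S}
    (hab : a ≠ b) (hsub : [a, b, a, b].Sublist w) (ha : a ∈ A) (hb : b ∈ A) :
    Crossing (restrictWord w A) := by
  classical
  refine crossing_iff_exists_sublist.2 ⟨a, b, hab, ?_⟩
  simpa [restrictWord, ha, hb] using hsub.filter (fun x => decide (x ∈ A))

theorem crossing_map_or_fiber_general {S T : Type*} (f : S → T) (w : List S)
    (hc : Crossing w) :
    Crossing (w.map f) ∨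
      ∃ t : T, (∃ a ∈ w, a ∈ f ⁻¹' {t}) ∧ Crossing (restrictWord w (f ⁻¹' {t})) := by
  obtain ⟨a, b, hab, hsub⟩ := crossing_iff_exists_sublist.1 hc
  by_cases hf : f a = f b
  · exact .inr ⟨f a, ⟨a, hsub.subset (by simp), rfl⟩,
      crossing_restrictWord_of_sublist hab hsub rfl hf.symm⟩
  · exact .inl (crossing_map_of_sublist f hsub hf)

/-- For a crossing word `w` on `S` and any `f : S → T`, either `f(w)` is
crossing or some fiber restriction `w | f⁻¹({t})` is defined and crossing. -/
theorem crossing_map_or_fiber {S T : Type*} (f : S → T) (w : List S) (hw : w ≠ [])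
    (hc : Crossing w) :
    Crossing (w.map f) ∨
      ∃ t : T, (∃ a ∈ w, a ∈ f ⁻¹' {t}) ∧ Crossing (restrictWord w (f ⁻¹' {t})) :=
  crossing_map_or_fiber_general f w hc
end
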